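/- arXiv:1511.00196 — 2 statements merged into one kernel-verified Lean document; each statement's English description precedes it below -/
import Mathlib

section
/- Let A > 0, B ≥ 0, and let α > 1/A and β ≥ (6 + 4B)/A with α, β ≥ 0. Define φ(s,t) = α/t + β/s² for s ≠ 0, t > 0. Then φ_t − φ_{ss} − B φ_s²/φ + A φ² ≥ (Aα² − α)/t² + 2Aαβ/(t s²) + (Aβ² − 6β − 4βB)/s⁴ > 0. -/
open Real

noncomputable def pds (f : ℝ → ℝ → ℝ) (s t : ℝ) : ℝ := deriv (fun x => f x t) s
noncomputable def pdt (f : ℝ → ℝ → ℝ) (s t : ℝ) : ℝ := deriv (fun x => f s x) t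

lemma deriv_inv_sq {s : ℝ} (hs : s ≠ 0) (β c : ℝ) :
    deriv (fun x : ℝ => c + β / x ^ 2) s = -2 * β / s ^ 3 := by
  have h2 : HasDerivAt (fun x : ℝ => x ^ 2) (2 * s ^ 1) s := by
    simpa using hasDerivAt_pow 2 s
  have hsq : s ^ 2 ≠ 0 := pow_ne_zero _ hs
  have h3 : HasDerivAt (fun x : ℝ => (x ^ 2)⁻¹) (-(2 * s ^ 1) / (s ^ 2) ^ 2) s := h2.inv hsq
  have h4 : HasDerivAt (fun x : ℝ => c + β / x ^ 2)
      (β * (-(2 * s ^ 1) / (s ^ 2) ^ 2)) s := by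
    simpa [div_eq_mul_inv] using (h3.const_mul β).const_add c
  rw [h4.deriv]
  field_simp

lemma deriv_inv_one {t : ℝ} (ht : t ≠ 0) (α c : ℝ) :
    deriv (fun x : ℝ => α / x + c) t = -α / t ^ 2 := by
  have h3 : HasDerivAt (fun x : ℝ => x⁻¹) (-(t ^ 2)⁻¹) t := hasDerivAt_inv ht
  have h4 : HasDerivAt (fun x : ℝ => α / x + c) (α * -(t ^ 2)⁻¹) t := by
    simpa [div_eq_mul_inv] using (h3.const_mul α).add_const c
  rw [h4.deriv]
  field_simp

lemma deriv_inv_cube {s : ℝ} (hs : s ≠ 0) (β : ℝ) :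
    deriv (fun x : ℝ => -2 * β / x ^ 3) s = 6 * β / s ^ 4 := by
  have h2 : HasDerivAt (fun x : ℝ => x ^ 3) (3 * s ^ 2) s := by
    simpa using hasDerivAt_pow 3 s
  have hsq : s ^ 3 ≠ 0 := pow_ne_zero _ hs
  have h3 : HasDerivAt (fun x : ℝ => (x ^ 3)⁻¹) (-(3 * s ^ 2) / (s ^ 3) ^ 2) s := h2.inv hsq
  have h4 : HasDerivAt (fun x : ℝ => -2 * β / x ^ 3)
      ((-2 * β) * (-(3 * s ^ 2) / (s ^ 3) ^ 2)) s := by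
    simpa [div_eq_mul_inv] using h3.const_mul (-2 * β)
  rw [h4.deriv]
  field_simp
  ring

theorem stmt_10 (A B α β : ℝ) (hA : 0 < A) (hB : 0 ≤ B)
    (hα : 1 / A < α) (hβ : (6 + 4 * B) / A ≤ β) (hα0 : 0 ≤ α) (hβ0 : 0 ≤ β)
    (φ : ℝ → ℝ → ℝ) (hφ : ∀ s t, φ s t = α / t + β / s ^ 2) :
    ∀ s t : ℝ, s ≠ 0 → 0 < t →
      pdt φ s t - pds (pds φ) s t - B * (pds φ s t) ^ 2 / φ s t + A * (φ s t) ^ 2 ≥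
        (A * α ^ 2 - α) / t ^ 2 + 2 * A * α * β / (t * s ^ 2) +
        (A * β ^ 2 - 6 * β - 4 * β * B) / s ^ 4 ∧
      0 < (A * α ^ 2 - α) / t ^ 2 + 2 * A * α * β / (t * s ^ 2) +
        (A * β ^ 2 - 6 * β - 4 * β * B) / s ^ 4 := by
  intro s t hs ht
  have hAinv : (0:ℝ) < 1 / A := by positivity
  have hα' : 0 < α := hAinv.trans hα
  have hs2 : (0:ℝ) < s ^ 2 := by positivity
  have hs4 : (0:ℝ) < s ^ 4 := by positivity
  have hs6 : (0:ℝ) < s ^ 6 := by positivity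
  -- partial derivatives
  have hpds : ∀ x : ℝ, x ≠ 0 → pds φ x t = -2 * β / x ^ 3 := by
    intro x hx
    unfold pds
    rw [show (fun y => φ y t) = fun y : ℝ => α / t + β / y ^ 2 by funext y; exact hφ y t]
    exact deriv_inv_sq hx β (α / t)
  have hpdt : pdt φ s t = -α / t ^ 2 := by
    unfold pdt
    rw [show (fun x => φ s x) = fun x : ℝ => α / x + β / s ^ 2 by funext x; exact hφ s x]
    exact deriv_inv_one ht.ne' α _
  have hpdss : pds (pds φ) s t = 6 * β / s ^ 4 := by
    have hev : (fun x => pds φ x t) =ᶠ[nhds s] (fun x : ℝ => -2 * β / x ^ 3) := by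
      filter_upwards [IsOpen.mem_nhds isOpen_ne hs] with x hx
      exact hpds x hx
    rw [show pds (pds φ) s t = deriv (fun x => pds φ x t) s from rfl, hev.deriv_eq]
    exact deriv_inv_cube hs β
  have hφval : φ s t = α / t + β / s ^ 2 := hφ s t
  have hφpos : 0 < φ s t := by rw [hφval]; positivity
  -- bound on the gradient term
  have hkey : B * (pds φ s t) ^ 2 / φ s t ≤ 4 * β * B / s ^ 4 := by
    rw [hpds s hs, div_le_iff₀ hφpos, hφval]
    have h1 : B * (-2 * β / s ^ 3) ^ 2 = 4 * B * β ^ 2 / s ^ 6 := by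
      field_simp; ring
    rw [h1]
    have hβs : β / s ^ 2 ≤ α / t + β / s ^ 2 := by
      have : 0 ≤ α / t := by positivity
      linarith
    have h2 : 4 * β * B / s ^ 4 * (β / s ^ 2) ≤ 4 * β * B / s ^ 4 * (α / t + β / s ^ 2) := by
      apply mul_le_mul_of_nonneg_left hβs; positivity
    calc 4 * B * β ^ 2 / s ^ 6 = 4 * β * B / s ^ 4 * (β / s ^ 2) := by field_simp
    _ ≤ _ := h2
  constructor
  · rw [hpdt, hpdss, hpds s hs, hφval]
    have hexp : A * (α / t + β / s ^ 2) ^ 2 =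
        A * α ^ 2 / t ^ 2 + 2 * A * α * β / (t * s ^ 2) + A * β ^ 2 / s ^ 4 := by
      field_simp; ring
    rw [hpds s hs, hφval] at hkey
    have e1 : (A * α ^ 2 - α) / t ^ 2 = A * α ^ 2 / t ^ 2 - α / t ^ 2 := by ring
    have e2 : (A * β ^ 2 - 6 * β - 4 * β * B) / s ^ 4
        = A * β ^ 2 / s ^ 4 - 6 * β / s ^ 4 - 4 * β * B / s ^ 4 := by ring
    rw [ge_iff_le, e1, e2, hexp]
    have : -α / t ^ 2 = -(α / t ^ 2) := by ring
    linarith [hkey]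
  · have h1 : 0 < (A * α ^ 2 - α) / t ^ 2 := by
      apply div_pos _ (by positivity)
      have : 1 < A * α := by
        rw [div_lt_iff₀ hA] at hα; linarith
      nlinarith
    have h2 : 0 ≤ 2 * A * α * β / (t * s ^ 2) := by positivity
    have h3 : 0 ≤ (A * β ^ 2 - 6 * β - 4 * β * B) / s ^ 4 := by
      apply div_nonneg _ hs4.le
      rw [div_le_iff₀ hA] at hβ
      nlinarith
    linarith
end

section
/- Suppose at a point one has h = u_{ss} + e^{2u} + (1/2+ε)/t = 0 with ε > 0, t > 0, together with h_t ≤ 0, h_s = 0, h_{ss} ≥ 0, where h_t = h_{ss} + 2h_s u_s + 4e^{2u}h + 2u_{ss}² − 2e^{4u} − 4(1/2+ε)e^{2u}/t − (1/2+ε)/t². Then one reaches a contradiction; i.e., no such point exists. -/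
theorem stmt_13 (u us uss t ε h ht hs hss : ℝ) (hε : 0 < ε) (htpos : 0 < t)
    (hhdef : h = uss + Real.exp (2 * u) + (1 / 2 + ε) / t)
    (hh0 : h = 0) (hht : ht ≤ 0) (hhs : hs = 0) (hhss : 0 ≤ hss)
    (hhteq : ht = hss + 2 * hs * us + 4 * Real.exp (2 * u) * h + 2 * uss ^ 2 -
      2 * Real.exp (4 * u) - 4 * (1 / 2 + ε) * Real.exp (2 * u) / t -
      (1 / 2 + ε) / t ^ 2) :
    False := by
  have he : Real.exp (4 * u) = Real.exp (2 * u) ^ 2 := by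
    rw [sq, ← Real.exp_add]; ring_nf
  have huss : uss = -(Real.exp (2 * u) + (1 / 2 + ε) / t) := by
    rw [hh0] at hhdef; linarith
  have ht2 : (0:ℝ) < t ^ 2 := by positivity
  rw [hhs, huss, he, hh0] at hhteq
  have e1 : 2 * (-(Real.exp (2 * u) + (1 / 2 + ε) / t)) ^ 2 -
      2 * Real.exp (2 * u) ^ 2 - 4 * (1 / 2 + ε) * Real.exp (2 * u) / t -
      (1 / 2 + ε) / t ^ 2 = ((1 + 2 * ε) * ε) / t ^ 2 := by
    field_simp
    ring
  have pos : 0 < ((1 + 2 * ε) * ε) / t ^ 2 := by positivity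
  linarith [hhteq, e1]
end
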